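/- Let k₀ ∈ ℕ be odd, ω = k₀/2 and A > 0. Then there exists κ₀ ∈ ℕ such that for every odd integer κ ≥ κ₀ and every α ∈ [0, A]: ω²k² > α for all k ∈ κℤ_odd, and | |m + a(l)| − √(ω²k² − α) | ≥ δ₀/4 for all l ∈ (−1/2, 1/2], all m ∈ ℤ and all k ∈ κℤ_odd. -/

import Mathlib

/-- The Floquet exponent function of the necklace graph. -/
noncomputable def blochA (l : ℝ) : ℝ :=
  (1 / (2 * Real.pi)) * Real.arccos ((1 / 9) * (8 * Real.cos (2 * Real.pi * l) + 1))

/-- The constant `δ₀ = 1 - arccos(-7/9)/π`. -/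
noncomputable def delta0 : ℝ := 1 - Real.arccos (-7 / 9) / Real.pi

/-- The set `κ·ℤ_odd = {κ·j : j odd}`. -/
def kappaOdd (κ : ℤ) : Set ℤ := {k | ∃ j : ℤ, Odd j ∧ k = κ * j}

/-!
The numbers `√(ω²k²)` with `k ∈ κℤ_odd` are half-odd integers `q/2`, hence at distance at least
`1/2` from the integer `|m|`, while `|m + a(l)|` lies within `a(l) ≤ (1 - δ₀)/2` of `|m|`.
Shifting by `α` moves the square root by at most `α/(q/2)`, which is `≤ δ₀/4` once `κ` (and so
`q ≥ κ`) is large compared with `A/δ₀`.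
-/

open Real

lemma delta0_pos : 0 < delta0 := by
  have h : arccos (-7 / 9) < π := arccos_lt_pi.2 (by norm_num)
  rw [delta0, sub_pos, div_lt_one pi_pos]
  exact h

lemma blochA_nonneg (l : ℝ) : 0 ≤ blochA l := by
  have := arccos_nonneg ((1 / 9) * (8 * cos (2 * π * l) + 1))
  unfold blochA
  positivity

lemma blochA_le (l : ℝ) : blochA l ≤ (1 - delta0) / 2 := by
  have harg : (-7 / 9 : ℝ) ≤ (1 / 9) * (8 * cos (2 * π * l) + 1) := by
    linarith [neg_one_le_cos (2 * π * l)]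
  have hδ : (1 - delta0) / 2 = (1 / (2 * π)) * arccos (-7 / 9) := by
    rw [delta0]
    field_simp
    ring
  rw [blochA, hδ]
  gcongr

lemma odd_of_mem_kappaOdd {κ k : ℤ} (hκ : Odd κ) (hk : k ∈ kappaOdd κ) : Odd k := by
  obtain ⟨j, hj, rfl⟩ := hk
  exact hκ.mul hj

lemma le_abs_of_mem_kappaOdd {κ k : ℤ} (hκ : 0 ≤ κ) (hk : k ∈ kappaOdd κ) : κ ≤ |k| := by
  obtain ⟨j, hj, rfl⟩ := hk
  have hj1 : 1 ≤ |j| := Int.one_le_abs (by rintro rfl; simp at hj)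
  rw [abs_mul, abs_of_nonneg hκ]
  nlinarith

lemma exists_odd_sq_half_of_mem_kappaOdd {k₀ : ℕ} (hk₀ : Odd k₀) {κ k : ℤ} (hκ : Odd κ)
    (hκ0 : 0 ≤ κ) (hk : k ∈ kappaOdd κ) :
    ∃ q : ℤ, Odd q ∧ κ ≤ q ∧ ((k₀ : ℝ) / 2) ^ 2 * (k : ℝ) ^ 2 = ((q : ℝ) / 2) ^ 2 := by
  refine ⟨k₀ * |k|, (Int.odd_coe_nat k₀).2 hk₀ |>.mul (odd_abs.2 (odd_of_mem_kappaOdd hκ hk)),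
    (le_abs_of_mem_kappaOdd hκ0 hk).trans
      (le_mul_of_one_le_left (abs_nonneg k) (by exact_mod_cast hk₀.pos)), ?_⟩
  push_cast
  rw [div_pow, div_pow, mul_pow, sq_abs]
  ring

lemma half_le_abs_half_odd_sub_int {q : ℤ} (hq : Odd q) (n : ℤ) :
    (1 : ℝ) / 2 ≤ |(q : ℝ) / 2 - n| := by
  have hne : q - 2 * n ≠ 0 := by
    obtain ⟨r, rfl⟩ := hq
    omega
  have h1 : (1 : ℝ) ≤ |((q - 2 * n : ℤ) : ℝ)| := by
    rw [← Int.cast_abs]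
    exact_mod_cast Int.one_le_abs hne
  have heq : (q : ℝ) / 2 - n = ((q - 2 * n : ℤ) : ℝ) / 2 := by push_cast; ring
  rw [heq, abs_div, abs_two]
  linarith

lemma abs_abs_intCast_add_sub_abs (m : ℤ) {a : ℝ} (h0 : 0 ≤ a) (h1 : a ≤ 1) :
    |(|(m : ℝ) + a| - |(m : ℝ)|)| = a := by
  rcases le_or_gt 0 m with hm | hm
  · have hm' : (0 : ℝ) ≤ m := by exact_mod_cast hm
    rw [abs_of_nonneg (by linarith : (0 : ℝ) ≤ m + a), abs_of_nonneg hm', add_sub_cancel_left,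
      abs_of_nonneg h0]
  · have hm' : (m : ℝ) ≤ -1 := by exact_mod_cast Int.le_sub_one_of_lt hm
    rw [abs_of_neg (by linarith : (m : ℝ) < 0), abs_of_nonpos (by linarith : (m : ℝ) + a ≤ 0),
      show -((m : ℝ) + a) - -m = -a by ring, abs_neg, abs_of_nonneg h0]

lemma abs_sub_sqrt_sq_sub_le {t α : ℝ} (ht : 0 < t) (hα : 0 ≤ α) :
    |t - √(t ^ 2 - α)| ≤ α / t := by
  set s := √(t ^ 2 - α)
  have hs0 : 0 ≤ s := sqrt_nonneg _
  have hst : s ≤ t := (sqrt_le_left ht.le).2 (by linarith)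
  have hs2 : t ^ 2 - α ≤ s ^ 2 := by
    rw [sq_sqrt']
    exact le_max_left _ _
  rw [abs_of_nonneg (by linarith), le_div_iff₀ ht]
  nlinarith

lemma quarter_le_abs_abs_intCast_add_sub_sqrt {δ a α : ℝ} (ha0 : 0 ≤ a) (ha : a ≤ (1 - δ) / 2)
    {q : ℤ} (hq : Odd q) (hq0 : 0 < q) (hα0 : 0 ≤ α) (hα : α ≤ δ * q / 8) (m : ℤ) :
    δ / 4 ≤ |(|(m : ℝ) + a| - √(((q : ℝ) / 2) ^ 2 - α))| := by
  have hqR : (0 : ℝ) < q := by exact_mod_cast hq0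
  have hδ : 0 ≤ δ := nonneg_of_mul_nonneg_left (by linarith) hqR
  have hgap := half_le_abs_half_odd_sub_int hq |m|
  have hshift : |(q : ℝ) / 2 - √(((q : ℝ) / 2) ^ 2 - α)| ≤ δ / 4 := by
    refine (abs_sub_sqrt_sq_sub_le (by positivity) hα0).trans ?_
    rw [div_le_iff₀ (by positivity)]
    linarith
  have hband : |(|(m : ℝ) + a| - ((|m| : ℤ) : ℝ))| ≤ (1 - δ) / 2 := by
    rw [Int.cast_abs, abs_abs_intCast_add_sub_abs m ha0 (by linarith)]
    exact ha
  have htri := abs_sub_le ((q : ℝ) / 2) (√(((q : ℝ) / 2) ^ 2 - α)) |(m : ℝ) + a|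
  have htri' := abs_sub_le ((q : ℝ) / 2) |(m : ℝ) + a| (((|m| : ℤ) : ℝ))
  rw [abs_sub_comm (√_)] at htri
  linarith

theorem sqrt_band_gap_condition_general (k₀ : ℕ) (hk₀ : Odd k₀) (A : ℝ) :
    ∃ κ₀ : ℕ, ∀ κ : ℤ, Odd κ → (κ₀ : ℤ) ≤ κ → ∀ α ∈ Set.Icc (0 : ℝ) A,
      (∀ k ∈ kappaOdd κ, α < ((k₀ : ℝ) / 2) ^ 2 * ((k : ℤ) : ℝ) ^ 2) ∧
      (∀ l ∈ Set.Ioc (-(1 / 2) : ℝ) (1 / 2), ∀ m : ℤ, ∀ k ∈ kappaOdd κ,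
        abs (|(m : ℝ) + blochA l| -
            Real.sqrt (((k₀ : ℝ) / 2) ^ 2 * ((k : ℤ) : ℝ) ^ 2 - α)) ≥ delta0 / 4) := by
  refine ⟨⌈8 * A / delta0⌉₊, fun κ hκ hκ₀ α ⟨hα0, hαA⟩ => ?_⟩
  have hκ0 : 0 < κ := by
    have : 0 ≤ κ := le_trans (by positivity) hκ₀
    obtain ⟨r, rfl⟩ := hκ
    omega
  have hAκ : 8 * A ≤ delta0 * κ := by
    have := (Nat.le_ceil (8 * A / delta0)).trans (by exact_mod_cast hκ₀ : _ ≤ (κ : ℝ))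
    rw [div_le_iff₀ delta0_pos] at this
    linarith
  have hhalf : ∀ k ∈ kappaOdd κ, ∃ q : ℤ, Odd q ∧ 0 < q ∧ α ≤ delta0 * q / 8 ∧
      ((k₀ : ℝ) / 2) ^ 2 * (k : ℝ) ^ 2 = ((q : ℝ) / 2) ^ 2 := by
    intro k hk
    obtain ⟨q, hq, hκq, hsq⟩ := exists_odd_sq_half_of_mem_kappaOdd hk₀ hκ hκ0.le hk
    have : (κ : ℝ) ≤ q := by exact_mod_cast hκq
    exact ⟨q, hq, hκ0.trans_le hκq, by nlinarith [delta0_pos], hsq⟩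
  refine ⟨fun k hk => ?_, fun l _ m k hk => ?_⟩ <;>
    obtain ⟨q, hq, hq0, hαq, hsq⟩ := hhalf k hk <;> rw [hsq]
  · have hδ1 : delta0 ≤ 1 := by linarith [blochA_nonneg 0, blochA_le 0]
    have : (1 : ℝ) ≤ q := by exact_mod_cast hq0
    nlinarith
  · exact quarter_le_abs_abs_intCast_add_sub_sqrt (blochA_nonneg l) (blochA_le l) hq hq0 hα0 hαq m

/-- (Validation of the hypothesis of Lemma 4.3 in Lemma 4.4.) For
`ω = k₀/2` with `k₀` odd and `A > 0` there is `κ₀` such that for all odd `κ ≥ κ₀` and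
all `α ∈ [0, A]`: `ω²k² > α` for all `k ∈ κℤ_odd`, and
`||m + a(l)| - √(ω²k² - α)| ≥ δ₀/4` for all `l ∈ (-1/2, 1/2]`, `m ∈ ℤ`, `k ∈ κℤ_odd`. -/
theorem sqrt_band_gap_condition (k₀ : ℕ) (hk₀ : Odd k₀) (A : ℝ) (hA : 0 < A) :
    ∃ κ₀ : ℕ, ∀ κ : ℤ, Odd κ → (κ₀ : ℤ) ≤ κ → ∀ α ∈ Set.Icc (0 : ℝ) A,
      (∀ k ∈ kappaOdd κ, α < ((k₀ : ℝ) / 2) ^ 2 * ((k : ℤ) : ℝ) ^ 2) ∧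
      (∀ l ∈ Set.Ioc (-(1 / 2) : ℝ) (1 / 2), ∀ m : ℤ, ∀ k ∈ kappaOdd κ,
        abs (|(m : ℝ) + blochA l| -
            Real.sqrt (((k₀ : ℝ) / 2) ^ 2 * ((k : ℤ) : ℝ) ^ 2 - α)) ≥ delta0 / 4) :=
  sqrt_band_gap_condition_general k₀ hk₀ A
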